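/- For any equivalence relation ≈ on E⁺, the chain of inclusions ≈_min ⊆ (≈_min)^tc ⊆ ≈ ⊆ (≈_min)^ic holds, where ^tc denotes transitive closure and ^ic denotes invariant closure. -/

import Mathlib

def FS (E : Type*) := {l : List E // l ≠ []}

def fsMul {E : Type*} (u v : FS E) : FS E := ⟨u.1 ++ v.1, by simp [u.2]⟩

def prepend {E : Type*} (a : E) (u : FS E) : FS E := ⟨a :: u.1, by simp⟩

def append {E : Type*} (u : FS E) (a : E) : FS E := ⟨u.1 ++ [a], by simp⟩

/-- `u ≈_min v`: `u ≈ v`, and they do not share a strippable common first letter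
nor a strippable common last letter. -/
def rMin {E : Type*} (r : FS E → FS E → Prop) (u v : FS E) : Prop :=
  r u v ∧
  ¬ (∃ (a : E) (u' v' : FS E), u = prepend a u' ∧ v = prepend a v' ∧ r u' v') ∧
  ¬ (∃ (b : E) (u'' v'' : FS E), u = append u'' b ∧ v = append v'' b ∧ r u'' v'')

/-- Surround a word by lists of letters on both sides. -/
def surround {E : Type*} (as : List E) (u : FS E) (bs : List E) : FS E :=
  ⟨as ++ u.1 ++ bs, by simp [u.2]⟩

/-- Invariant closure of a relation on `E⁺`. -/
def invClosure {E : Type*} (r : FS E → FS E → Prop) (u v : FS E) : Prop :=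
  ∃ (as bs : List E) (u' v' : FS E),
    u = surround as u' bs ∧ v = surround as v' bs ∧ r u' v'

/-- Transitive closure via finite chains. -/
def chainTC {α : Type*} (r : α → α → Prop) (a b : α) : Prop :=
  a = b ∨ ∃ n : ℕ, 1 ≤ n ∧ ∃ c : Fin (n + 1) → α,
    c 0 = a ∧ c (Fin.last n) = b ∧ ∀ i : Fin n, r (c i.castSucc) (c i.succ)

/-! Peeling common first and last letters off a pair `u ≈ v`, as long as the remainders stay
related, ends (the words get shorter) at an `≈_min`-pair, and the peeled letters surround it;
this puts `≈` inside the invariant closure of `≈_min`. A chain of `≈_min`-steps stays inside `≈`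
because `≈` is an equivalence relation. -/

namespace chainTC

variable {α : Type*} {r : α → α → Prop} {a b : α}

theorem of_rel (h : r a b) : chainTC r a b :=
  Or.inr ⟨1, le_rfl, ![a, b], rfl, rfl, fun i => by fin_cases i; exact h⟩

theorem reflTransGen (h : chainTC r a b) : Relation.ReflTransGen r a b := by
  obtain rfl | ⟨n, -, c, rfl, rfl, hstep⟩ := h
  · exact .refl
  · exact Fin.induction (motive := fun i => Relation.ReflTransGen r (c 0) (c i)) .refl
      (fun i ih => ih.tail (hstep i)) (Fin.last n)

end chainTC

section Words

variable {E : Type*}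

theorem prepend_surround (a : E) (as : List E) (u : FS E) (bs : List E) :
    prepend a (surround as u bs) = surround (a :: as) u bs := rfl

theorem append_surround (as : List E) (u : FS E) (bs : List E) (b : E) :
    append (surround as u bs) b = surround as u (bs ++ [b]) :=
  Subtype.ext (List.append_assoc _ _ _)

theorem surround_nil_nil (u : FS E) : surround [] u [] = u :=
  Subtype.ext (List.append_nil _)

variable {s : FS E → FS E → Prop} {u v : FS E}

theorem invClosure_of_rel (h : s u v) : invClosure s u v :=
  ⟨[], [], u, v, (surround_nil_nil u).symm, (surround_nil_nil v).symm, h⟩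

theorem invClosure.prepend (a : E) (h : invClosure s u v) :
    invClosure s (prepend a u) (prepend a v) := by
  obtain ⟨as, bs, u', v', rfl, rfl, h'⟩ := h
  exact ⟨a :: as, bs, u', v', prepend_surround .., prepend_surround .., h'⟩

theorem invClosure.append (b : E) (h : invClosure s u v) :
    invClosure s (append u b) (append v b) := by
  obtain ⟨as, bs, u', v', rfl, rfl, h'⟩ := h
  exact ⟨as, bs ++ [b], u', v', append_surround .., append_surround .., h'⟩

theorem invClosure_rMin_of_rel (r : FS E → FS E → Prop) {u v : FS E} (h : r u v) :
    invClosure (rMin r) u v := by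
  by_cases hfirst : ∃ (a : E) (u' v' : FS E), u = prepend a u' ∧ v = prepend a v' ∧ r u' v'
  · obtain ⟨a, u', v', rfl, rfl, h'⟩ := hfirst
    exact (invClosure_rMin_of_rel r h').prepend a
  by_cases hlast : ∃ (b : E) (u'' v'' : FS E), u = append u'' b ∧ v = append v'' b ∧ r u'' v''
  · obtain ⟨b, u'', v'', rfl, rfl, h''⟩ := hlast
    exact (invClosure_rMin_of_rel r h'').append b
  exact invClosure_of_rel ⟨h, hfirst, hlast⟩
termination_by u.1.length
decreasing_by all_goals subst_vars; simp [prepend, append]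

end Words

/-- For any equivalence relation `≈` on `E⁺`:
`≈_min ⊆ (≈_min)^tc ⊆ ≈ ⊆ (≈_min)^ic`. -/
theorem rMin_inclusions {E : Type*} (r : FS E → FS E → Prop)
    (hequiv : Equivalence r) :
    (∀ u v : FS E, rMin r u v → chainTC (rMin r) u v) ∧
    (∀ u v : FS E, chainTC (rMin r) u v → r u v) ∧
    (∀ u v : FS E, r u v → invClosure (rMin r) u v) :=
  ⟨fun _ _ => chainTC.of_rel,
    fun u v h => Relation.reflTransGen_le_of_equivalence_of_le hequiv (fun _ _ => And.left) u v
      h.reflTransGen,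
    fun _ _ => invClosure_rMin_of_rel r⟩
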